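/- Fix α_4 > 0 and a polynomial 𝒫(X) = a_3X³ + a_4X⁴ + … + a_{2D}X^{2D} (D ≥ 2) with 𝒫(α) ≥ 0 for all α ∈ ℝ, and set E_int(φ) = (α_4/4)∫_{ℚ_p^N} 𝒫(φ(x)) d^N x. Then Z^{(l)} = ∫_{L_ℝ^l} e^{−E_int(φ)} dP_l(φ) ∈ (0,1], for all x_1,…,x_m ∈ ℚ_p^N the function φ ↦ φ(x_1)⋯φ(x_m) e^{−E_int(φ)} is P_l-integrable, and the discrete m-point correlation function G_l^{(m)}(x_1,…,x_m) = (1/Z^{(l)}) ∫_{L_ℝ^l} φ(x_1)⋯φ(x_m) e^{−E_int(φ)} dP_l(φ) is, as a function of (x_1,…,x_m), a Bruhat–Schwartz test function on (ℚ_p^N)^m: it vanishes unless every x_k lies in B_l^N, and it is constant on every product of balls (i_1+p^lℤ_p^N) × ⋯ × (i_m+p^lℤ_p^N) with i_1,…,i_m ∈ G_l. -/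

import Mathlib

open MeasureTheory Filter

noncomputable instance (p : ℕ) [Fact p.Prime] : MeasurableSpace ℚ_[p] := borel _
instance (p : ℕ) [Fact p.Prime] : BorelSpace ℚ_[p] := ⟨rfl⟩

/-- Characteristic function (as a real-valued function) of the ball `i + p^l ℤ_p^N`. -/
noncomputable def ballInd (p N : ℕ) [Fact p.Prime] (l : ℕ) (i x : Fin N → ℚ_[p]) : ℝ :=
  Set.indicator {y : Fin N → ℚ_[p] | ‖y - i‖ ≤ (p : ℝ) ^ (-(l : ℤ))} (fun _ => (1 : ℝ)) x

/-- The test function with coefficients indexed by the representatives. -/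
noncomputable def phiC (p N : ℕ) [Fact p.Prime] (l : ℕ) (G : Finset (Fin N → ℚ_[p]))
    (c : {x // x ∈ G} → ℝ) (x : Fin N → ℚ_[p]) : ℝ :=
  ∑ i : {x // x ∈ G}, c i * ballInd p N l (i : Fin N → ℚ_[p]) x

/-- The free energy functional `E₀`. -/
noncomputable def Efree (p N : ℕ) [Fact p.Prime] (μ : Measure (Fin N → ℚ_[p]))
    (w : (Fin N → ℚ_[p]) → ℝ) (γ α₂ : ℝ) (φ : (Fin N → ℚ_[p]) → ℝ) : ℝ :=
  γ / 4 * ∫ x, ∫ y, (φ x - φ y) ^ 2 / w (x - y) ∂μ ∂μ + α₂ / 2 * ∫ x, (φ x) ^ 2 ∂μ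

/-- The interaction energy `E_int(φ) = (α₄/4) ∫ 𝒫(φ(x)) d^N x`, for the polynomial
`𝒫(X) = Σ_{k=3}^{2D} a_k X^k`. -/
noncomputable def Eint (p N : ℕ) [Fact p.Prime] (μ : Measure (Fin N → ℚ_[p]))
    (a : ℕ → ℝ) (D : ℕ) (α₄ : ℝ) (φ : (Fin N → ℚ_[p]) → ℝ) : ℝ :=
  α₄ / 4 * ∫ x, ∑ k ∈ Finset.Icc 3 (2 * D), a k * (φ x) ^ k ∂μ

/-- The subspace of mean-zero coefficient vectors (the coefficient space of `L_ℝ^l`). -/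
def meanZero (ι : Type*) [Fintype ι] : Submodule ℝ (ι → ℝ) where
  carrier := {c | ∑ i, c i = 0}
  add_mem' := by
    intro a b ha hb
    simp only [Set.mem_setOf_eq, Pi.add_apply, Finset.sum_add_distrib] at *
    rw [ha, hb]; ring
  zero_mem' := by simp
  smul_mem' := by
    intro r a ha
    simp only [Set.mem_setOf_eq, Pi.smul_apply, smul_eq_mul, ← Finset.mul_sum] at *
    rw [ha]; ring

noncomputable section

lemma norm_comp {ι : Type*} [Fintype ι] (S : Submodule ℝ (ι → ℝ)) :
    ∃ lam : ℝ, 0 < lam ∧ ∀ c : S, lam * ‖c‖ ^ 2 ≤ ∑ i, ((c : ι → ℝ) i) ^ 2 := by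
  classical
  let j : S →ₗ[ℝ] EuclideanSpace ℝ ι :=
    ((EuclideanSpace.equiv ι ℝ).symm : (ι → ℝ) →L[ℝ] EuclideanSpace ℝ ι).toLinearMap ∘ₗ S.subtype
  have hinj : Function.Injective j := by
    intro c d h
    apply Subtype.ext
    exact (EuclideanSpace.equiv ι ℝ).symm.injective h
  let e : S ≃ₗ[ℝ] LinearMap.range j := LinearEquiv.ofInjective j hinj
  let eL : S ≃L[ℝ] LinearMap.range j := e.toContinuousLinearEquiv
  have key : ∀ c : S, ‖c‖ ≤ (‖(eL.symm : LinearMap.range j →L[ℝ] S)‖ + 1) * Real.sqrt (∑ i, ((c : ι → ℝ) i) ^ 2) := by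
    intro c
    have h1 : ‖c‖ = ‖eL.symm (eL c)‖ := by rw [eL.symm_apply_apply]
    have h2 : ‖eL.symm (eL c)‖ ≤ ‖(eL.symm : LinearMap.range j →L[ℝ] S)‖ * ‖eL c‖ :=
      (eL.symm : LinearMap.range j →L[ℝ] S).le_opNorm _
    have h3 : ‖eL c‖ = Real.sqrt (∑ i, ((c : ι → ℝ) i) ^ 2) := by
      have : ‖eL c‖ = ‖j c‖ := rfl
      rw [this, EuclideanSpace.norm_eq]
      congr 1
      refine Finset.sum_congr rfl fun i _ => ?_
      rw [Real.norm_eq_abs, sq_abs]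
      rfl
    have h4 : (0:ℝ) ≤ Real.sqrt (∑ i, ((c : ι → ℝ) i) ^ 2) := Real.sqrt_nonneg _
    nlinarith [norm_nonneg (eL.symm : LinearMap.range j →L[ℝ] S), h2, h3 ▸ h2]
  set C := ‖(eL.symm : LinearMap.range j →L[ℝ] S)‖ + 1 with hC
  have hCpos : 0 < C := by positivity
  refine ⟨C⁻¹ ^ 2, by positivity, fun c => ?_⟩
  have h := key c
  have hs : (0:ℝ) ≤ ∑ i, ((c : ι → ℝ) i) ^ 2 := Finset.sum_nonneg fun i _ => sq_nonneg _
  have : ‖c‖ ^ 2 ≤ C ^ 2 * (∑ i, ((c : ι → ℝ) i) ^ 2) := by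
    have h2 := mul_self_le_mul_self (norm_nonneg c) h
    nlinarith [Real.sq_sqrt hs, Real.sqrt_nonneg (∑ i, ((c : ι → ℝ) i) ^ 2)]
  calc C⁻¹ ^ 2 * ‖c‖ ^ 2 ≤ C⁻¹ ^ 2 * (C ^ 2 * (∑ i, ((c : ι → ℝ) i) ^ 2)) := by
        apply mul_le_mul_of_nonneg_left this (by positivity)
    _ = (∑ i, ((c : ι → ℝ) i) ^ 2) := by
        field_simp

lemma integrable_exp_neg_sq_norm_euclidean {n : ℕ} {b : ℝ} (hb : 0 < b)
    (μ : Measure (EuclideanSpace ℝ (Fin n))) [μ.IsAddHaarMeasure] :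
    Integrable (fun v : EuclideanSpace ℝ (Fin n) => Real.exp (-(b * ‖v‖ ^ 2))) μ := by
  have hvol : Integrable (fun v : EuclideanSpace ℝ (Fin n) => Real.exp (-(b * ‖v‖ ^ 2))) volume := by
    have h := GaussianFourier.integrable_cexp_neg_mul_sq_norm_add
      (V := EuclideanSpace ℝ (Fin n)) (b := (b : ℂ)) (by simpa using hb) 0 0
    have h2 := h.norm
    refine h2.congr ?_
    filter_upwards with v
    simp [Complex.norm_exp, ← Complex.ofReal_pow, neg_mul]
  rw [μ.isAddLeftInvariant_eq_smul volume]
  exact hvol.smul_measure ENNReal.coe_ne_top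


set_option maxHeartbeats 1000000 in
lemma gauss_int {ι : Type*} [Fintype ι] (S : Submodule ℝ (ι → ℝ))
    (lebS : Measure S) [lebS.IsAddHaarMeasure] {b : ℝ} (hb : 0 < b) :
    Integrable (fun c : S => Real.exp (-(b * ∑ i, ((c : ι → ℝ) i) ^ 2))) lebS := by
  obtain ⟨lam, hlam, hlb⟩ := norm_comp S
  set n := Module.finrank ℝ S with hn
  set e := toEuclidean (E := S) with he
  set L := (e : S →L[ℝ] EuclideanSpace ℝ (Fin n)) with hL
  set C := ‖L‖ + 1 with hC
  have hCpos : 0 < C := by positivity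
  set g : EuclideanSpace ℝ (Fin n) → ℝ :=
    fun v => Real.exp (-(b * ∑ i, ((e.symm v : ι → ℝ) i) ^ 2)) with hg
  have hgcont : Continuous g := by
    apply Real.continuous_exp.comp
    apply Continuous.neg
    apply continuous_const.mul
    apply continuous_finset_sum
    intro i _
    exact ((continuous_apply i).comp (continuous_subtype_val.comp e.symm.continuous)).pow 2
  have hmap : Integrable g (lebS.map e) := by
    haveI : (lebS.map (e : S → EuclideanSpace ℝ (Fin n))).IsAddHaarMeasure :=
      e.isAddHaarMeasure_map lebS
    have hbound : ∀ v : EuclideanSpace ℝ (Fin n),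
        g v ≤ Real.exp (-(b * lam / C ^ 2 * ‖v‖ ^ 2)) := by
      intro v
      apply Real.exp_le_exp.2
      rw [neg_le_neg_iff]
      have h1 : lam * ‖e.symm v‖ ^ 2 ≤ ∑ i, ((e.symm v : ι → ℝ) i) ^ 2 := hlb _
      have h2 : ‖v‖ ≤ C * ‖e.symm v‖ := by
        calc ‖v‖ = ‖e (e.symm v)‖ := by rw [e.apply_symm_apply v]
          _ = ‖L (e.symm v)‖ := rfl
          _ ≤ ‖L‖ * ‖e.symm v‖ := L.le_opNorm _
          _ ≤ C * ‖e.symm v‖ :=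
              mul_le_mul_of_nonneg_right (by simp [hC]) (norm_nonneg _)
      have h3 : ‖v‖ ^ 2 ≤ C ^ 2 * ‖e.symm v‖ ^ 2 := by
        nlinarith [norm_nonneg v, norm_nonneg (e.symm v)]
      have h4 : b * lam / C ^ 2 * ‖v‖ ^ 2 ≤ b * (lam * ‖e.symm v‖ ^ 2) := by
        rw [div_mul_eq_mul_div, div_le_iff₀ (by positivity)]
        nlinarith [mul_le_mul_of_nonneg_left h3 (le_of_lt (mul_pos hb hlam))]
      exact h4.trans (by nlinarith)
    have hint := integrable_exp_neg_sq_norm_euclidean (b := b * lam / C ^ 2)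
      (by positivity) (lebS.map e)
    refine hint.mono' hgcont.aestronglyMeasurable ?_
    filter_upwards with v
    rw [Real.norm_eq_abs, abs_of_pos (Real.exp_pos _)]
    exact hbound v
  set me : S ≃ᵐ EuclideanSpace ℝ (Fin n) := e.toHomeomorph.toMeasurableEquiv with hme
  have hcoe : (⇑me : S → EuclideanSpace ℝ (Fin n)) = ⇑e := rfl
  have hmap' : Integrable g (lebS.map me) := by rw [hcoe]; exact hmap
  have := (MeasureTheory.integrable_map_equiv me g).1 hmap'
  refine this.congr ?_
  filter_upwards with c
  have hmec : me c = e c := rfl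
  simp only [Function.comp, hg, hmec, e.symm_apply_apply]

lemma pow_le_exp_aux (m : ℕ) {x : ℝ} (hx : 0 ≤ x) : x ^ m / m.factorial ≤ Real.exp x := by
  calc x ^ m / m.factorial ≤ ∑ i ∈ Finset.range (m + 1), x ^ i / i.factorial := by
        refine Finset.single_le_sum (f := fun i => x ^ i / (i.factorial : ℝ))
          (fun i _ => by positivity) (Finset.self_mem_range_succ m)
    _ ≤ Real.exp x := Real.sum_le_exp_of_nonneg hx _

lemma poly_exp (m : ℕ) {ε : ℝ} (hε : 0 < ε) :
    ∃ C : ℝ, 0 < C ∧ ∀ t : ℝ, 0 ≤ t →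
      (1 + t) ^ m * Real.exp (-(ε * t)) ≤ C * Real.exp (-(ε / 2 * t)) := by
  refine ⟨2 ^ m * (1 + m.factorial * (2 / ε) ^ m), by positivity, fun t ht => ?_⟩
  have h1 : (1 + t) ^ m ≤ 2 ^ m * (1 + t ^ m) := by
    calc (1 + t) ^ m ≤ (2 * max 1 t) ^ m := by
          apply pow_le_pow_left₀ (by linarith)
          rcases le_total t 1 with h | h
          · rw [max_eq_left h]; linarith
          · rw [max_eq_right h]; linarith
      _ = 2 ^ m * max 1 t ^ m := mul_pow 2 _ m
      _ ≤ 2 ^ m * (1 + t ^ m) := by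
          apply mul_le_mul_of_nonneg_left _ (by positivity)
          rcases le_total t 1 with h | h
          · rw [max_eq_left h]; simp
            nlinarith [pow_nonneg ht m]
          · rw [max_eq_right h]
            nlinarith [pow_nonneg ht m]
  have h2 : t ^ m ≤ m.factorial * (2 / ε) ^ m * Real.exp (ε / 2 * t) := by
    have := pow_le_exp_aux m (x := ε / 2 * t) (by positivity)
    have hfac : (0:ℝ) < m.factorial := by positivity
    rw [div_le_iff₀ hfac] at this
    have hexpand : (ε / 2 * t) ^ m = (ε / 2) ^ m * t ^ m := mul_pow _ _ m
    have h3 : (ε / 2) ^ m * t ^ m ≤ Real.exp (ε / 2 * t) * m.factorial := hexpand ▸ this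
    have h4 : (0:ℝ) < (ε / 2) ^ m := by positivity
    rw [show (2 / ε : ℝ) ^ m = ((ε / 2) ^ m)⁻¹ by rw [← inv_pow]; congr 1; rw [inv_div]]
    rw [mul_comm (m.factorial : ℝ) _, mul_assoc, inv_mul_eq_div, le_div_iff₀ h4]
    nlinarith [h3]
  have hexp : Real.exp (-(ε * t)) ≤ Real.exp (-(ε / 2 * t)) := by
    apply Real.exp_le_exp.2; nlinarith
  have hsplit : t ^ m * Real.exp (-(ε * t)) ≤
      m.factorial * (2 / ε) ^ m * Real.exp (-(ε / 2 * t)) := by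
    calc t ^ m * Real.exp (-(ε * t)) ≤
        (m.factorial * (2 / ε) ^ m * Real.exp (ε / 2 * t)) * Real.exp (-(ε * t)) :=
          mul_le_mul_of_nonneg_right h2 (Real.exp_pos _).le
      _ = m.factorial * (2 / ε) ^ m * (Real.exp (ε / 2 * t) * Real.exp (-(ε * t))) := by ring
      _ = m.factorial * (2 / ε) ^ m * Real.exp (-(ε / 2 * t)) := by
          rw [← Real.exp_add]; ring_nf
  calc (1 + t) ^ m * Real.exp (-(ε * t)) ≤ 2 ^ m * (1 + t ^ m) * Real.exp (-(ε * t)) :=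
        mul_le_mul_of_nonneg_right h1 (Real.exp_pos _).le
    _ = 2 ^ m * Real.exp (-(ε * t)) + 2 ^ m * (t ^ m * Real.exp (-(ε * t))) := by ring
    _ ≤ 2 ^ m * Real.exp (-(ε / 2 * t)) +
        2 ^ m * (m.factorial * (2 / ε) ^ m * Real.exp (-(ε / 2 * t))) := by
        have h5 : (0:ℝ) ≤ 2 ^ m := by positivity
        apply add_le_add
        · exact mul_le_mul_of_nonneg_left hexp h5
        · exact mul_le_mul_of_nonneg_left hsplit h5
    _ = 2 ^ m * (1 + m.factorial * (2 / ε) ^ m) * Real.exp (-(ε / 2 * t)) := by ring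


section aux
variable (p N : ℕ) [Fact p.Prime]

lemma ultra_add (a b : Fin N → ℚ_[p]) : ‖a + b‖ ≤ max ‖a‖ ‖b‖ := by
  have hmax : (0:ℝ) ≤ max ‖a‖ ‖b‖ := le_max_of_le_left (norm_nonneg a)
  apply pi_norm_le_iff_of_nonneg hmax |>.2
  intro i
  calc ‖(a + b) i‖ = ‖a i + b i‖ := rfl
    _ ≤ max ‖a i‖ ‖b i‖ := IsUltrametricDist.norm_add_le_max _ _
    _ ≤ max ‖a‖ ‖b‖ := max_le_max (norm_le_pi_norm a i) (norm_le_pi_norm b i)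

lemma ultra_sub (a b c : Fin N → ℚ_[p]) : ‖a - c‖ ≤ max ‖a - b‖ ‖b - c‖ := by
  have : a - c = (a - b) + (b - c) := by abel
  rw [this]
  exact ultra_add p N _ _

lemma ballInd_of_mem {l : ℕ} {i x : Fin N → ℚ_[p]} (h : ‖x - i‖ ≤ (p : ℝ) ^ (-(l : ℤ))) :
    ballInd p N l i x = 1 := by
  simp only [ballInd]
  exact Set.indicator_of_mem h (fun _ => (1:ℝ))

lemma ballInd_of_not_mem {l : ℕ} {i x : Fin N → ℚ_[p]} (h : ¬ ‖x - i‖ ≤ (p : ℝ) ^ (-(l : ℤ))) :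
    ballInd p N l i x = 0 := by
  simp only [ballInd]
  exact Set.indicator_of_notMem h (fun _ => (1:ℝ))

variable {l : ℕ} {G : Finset (Fin N → ℚ_[p])}

/-- distinct centers give disjoint balls -/
lemma ball_disj (hGsep : ∀ i ∈ G, ∀ j ∈ G, i ≠ j → (p : ℝ) ^ (-(l : ℤ)) < ‖i - j‖)
    {i j x : Fin N → ℚ_[p]} (hi : i ∈ G) (hj : j ∈ G) (hne : i ≠ j)
    (hx : ‖x - i‖ ≤ (p : ℝ) ^ (-(l : ℤ))) : ¬ ‖x - j‖ ≤ (p : ℝ) ^ (-(l : ℤ)) := by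
  intro hx2
  have h1 : ‖i - j‖ ≤ max ‖i - x‖ ‖x - j‖ := ultra_sub p N i x j
  rw [norm_sub_rev i x] at h1
  have := hGsep i hi j hj hne
  have h2 : ‖i - j‖ ≤ (p : ℝ) ^ (-(l : ℤ)) := h1.trans (max_le hx hx2)
  linarith

lemma phiC_of_mem (hGsep : ∀ i ∈ G, ∀ j ∈ G, i ≠ j → (p : ℝ) ^ (-(l : ℤ)) < ‖i - j‖)
    {i : Fin N → ℚ_[p]} (hi : i ∈ G) {x : Fin N → ℚ_[p]}
    (hx : ‖x - i‖ ≤ (p : ℝ) ^ (-(l : ℤ))) (c : {x // x ∈ G} → ℝ) :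
    phiC p N l G c x = c ⟨i, hi⟩ := by
  rw [phiC]
  rw [Fintype.sum_eq_single (⟨i, hi⟩ : {x // x ∈ G})]
  · rw [ballInd_of_mem p N hx, mul_one]
  · intro j hj
    have hne : i ≠ (j : Fin N → ℚ_[p]) := fun h => hj (Subtype.ext h.symm)
    rw [ballInd_of_not_mem p N (ball_disj p N hGsep hi j.2 hne hx), mul_zero]

lemma phiC_of_not_mem {x : Fin N → ℚ_[p]}
    (hx : ∀ i ∈ G, ¬ ‖x - i‖ ≤ (p : ℝ) ^ (-(l : ℤ))) (c : {x // x ∈ G} → ℝ) :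
    phiC p N l G c x = 0 := by
  rw [phiC]
  apply Finset.sum_eq_zero
  intro j _
  rw [ballInd_of_not_mem p N (hx j j.2), mul_zero]

lemma gcomp_eq_sum_indicator
    (hGsep : ∀ i ∈ G, ∀ j ∈ G, i ≠ j → (p : ℝ) ^ (-(l : ℤ)) < ‖i - j‖)
    (g : ℝ → ℝ) (hg : g 0 = 0) (c : {x // x ∈ G} → ℝ) (x : Fin N → ℚ_[p]) :
    g (phiC p N l G c x) =
      ∑ i : {x // x ∈ G}, Set.indicator
        {y : Fin N → ℚ_[p] | ‖y - (i : Fin N → ℚ_[p])‖ ≤ (p : ℝ) ^ (-(l : ℤ))}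
        (fun _ => g (c i)) x := by
  by_cases hx : ∃ i ∈ G, ‖x - i‖ ≤ (p : ℝ) ^ (-(l : ℤ))
  · obtain ⟨i, hi, hxi⟩ := hx
    rw [phiC_of_mem p N hGsep hi hxi c]
    rw [Fintype.sum_eq_single (⟨i, hi⟩ : {x // x ∈ G})]
    · exact (Set.indicator_of_mem (show x ∈ {y : Fin N → ℚ_[p] | ‖y - i‖ ≤ (p : ℝ) ^ (-(l : ℤ))} from hxi) (fun _ => g (c ⟨i, hi⟩))).symm
    · intro j hj
      have hne : i ≠ (j : Fin N → ℚ_[p]) := fun h => hj (Subtype.ext h.symm)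
      exact Set.indicator_of_notMem
        (fun hmem => ball_disj p N hGsep hi j.2 hne hxi hmem) (fun _ => g (c j))
  · have hx' : ∀ i ∈ G, ¬ ‖x - i‖ ≤ (p : ℝ) ^ (-(l : ℤ)) :=
      fun i hi h => hx ⟨i, hi, h⟩
    rw [phiC_of_not_mem p N hx' c, hg]
    symm
    apply Finset.sum_eq_zero
    intro j _
    exact Set.indicator_of_notMem (fun hmem => hx' j j.2 hmem) (fun _ => g (c j))

open MeasureTheory in
lemma integral_gcomp (μ : Measure (Fin N → ℚ_[p])) [μ.IsAddHaarMeasure]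
    (hGsep : ∀ i ∈ G, ∀ j ∈ G, i ≠ j → (p : ℝ) ^ (-(l : ℤ)) < ‖i - j‖)
    (g : ℝ → ℝ) (hg : g 0 = 0) (c : {x // x ∈ G} → ℝ) :
    ∫ x, g (phiC p N l G c x) ∂μ =
      (μ (Metric.closedBall 0 ((p : ℝ) ^ (-(l : ℤ))))).toReal * ∑ i : {x // x ∈ G}, g (c i) := by
  set r := (p : ℝ) ^ (-(l : ℤ)) with hrdef
  have hB : ∀ i : Fin N → ℚ_[p],
      {y : Fin N → ℚ_[p] | ‖y - i‖ ≤ r} = Metric.closedBall i r := by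
    intro i
    ext y
    simp [Metric.mem_closedBall, dist_eq_norm]
  have hBvol : ∀ i : Fin N → ℚ_[p], μ (Metric.closedBall i r) = μ (Metric.closedBall 0 r) := by
    intro i
    have hpre : (fun y : Fin N → ℚ_[p] => -i + y) ⁻¹' Metric.closedBall 0 r
        = Metric.closedBall i r := by
      ext y
      simp [Metric.mem_closedBall, dist_eq_norm, neg_add_eq_sub]
    rw [← hpre, measure_preimage_add]
  have hfin : μ (Metric.closedBall (0 : Fin N → ℚ_[p]) r) < ⊤ :=
    (isCompact_closedBall _ _).measure_lt_top
  calc ∫ x, g (phiC p N l G c x) ∂μ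
      = ∫ x, ∑ i : {x // x ∈ G}, Set.indicator
          {y : Fin N → ℚ_[p] | ‖y - (i : Fin N → ℚ_[p])‖ ≤ r}
          (fun _ => g (c i)) x ∂μ := by
        apply integral_congr_ae
        filter_upwards with x
        exact gcomp_eq_sum_indicator p N hGsep g hg c x
    _ = ∑ i : {x // x ∈ G}, ∫ x, Set.indicator
          {y : Fin N → ℚ_[p] | ‖y - (i : Fin N → ℚ_[p])‖ ≤ r}
          (fun _ => g (c i)) x ∂μ := by
        apply integral_finset_sum
        intro i _
        rw [hB]
        rw [integrable_indicator_iff measurableSet_closedBall]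
        exact integrableOn_const (by rw [hBvol]; exact hfin.ne)
    _ = ∑ i : {x // x ∈ G}, (μ (Metric.closedBall 0 r)).toReal * g (c i) := by
        apply Finset.sum_congr rfl
        intro i _
        rw [hB, integral_indicator_const _ measurableSet_closedBall,
          hBvol, smul_eq_mul]
        rw [measureReal_def, hBvol]
    _ = (μ (Metric.closedBall 0 r)).toReal * ∑ i : {x // x ∈ G}, g (c i) := by
        rw [Finset.mul_sum]

end aux

end

/-- for the Gaussian measure `P_l` on `L_ℝ^l` with density proportional
to `e^{−E₀^{(l)}}`, the partition function `Z^{(l)}` lies in `(0,1]`, the integrands of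
the discrete correlation functions are integrable, and the discrete `m`-point
correlation function is a Bruhat–Schwartz test function on `(ℚ_p^N)^m`. -/
theorem statement17
    (p : ℕ) [Fact p.Prime] (hp3 : 3 ≤ p) (N : ℕ) (hN : 1 ≤ N)
    (μ : Measure (Fin N → ℚ_[p])) [μ.IsAddHaarMeasure]
    (hμ1 : μ (Metric.closedBall 0 1) = 1)
    (δ : ℝ) (hδ : (N : ℝ) < δ)
    (w : (Fin N → ℚ_[p]) → ℝ)
    (hw0 : ∀ y, 0 ≤ w y)
    (hrad : ∀ x y : Fin N → ℚ_[p], ‖x‖ = ‖y‖ → w x = w y)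
    (hcont : Continuous w)
    (hmono : ∀ x y : Fin N → ℚ_[p], ‖x‖ ≤ ‖y‖ → w x ≤ w y)
    (hzero : ∀ y : Fin N → ℚ_[p], w y = 0 ↔ y = 0)
    (C₀ C₁ : ℝ) (hC₀ : 0 < C₀) (hC₁ : 0 < C₁)
    (hlow : ∀ y : Fin N → ℚ_[p], C₀ * ‖y‖ ^ δ ≤ w y)
    (hupp : ∀ y : Fin N → ℚ_[p], w y ≤ C₁ * ‖y‖ ^ δ)
    (γ α₂ : ℝ) (hγ : 0 < γ) (hα₂ : 0 < α₂)
    (l : ℕ) (hl : 1 ≤ l)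
    (G : Finset (Fin N → ℚ_[p]))
    (hGmem : ∀ i ∈ G, ‖i‖ ≤ (p : ℝ) ^ (l : ℤ))
    (hGcov : ∀ x : Fin N → ℚ_[p], ‖x‖ ≤ (p : ℝ) ^ (l : ℤ) →
      ∃ i ∈ G, ‖x - i‖ ≤ (p : ℝ) ^ (-(l : ℤ)))
    (hGsep : ∀ i ∈ G, ∀ j ∈ G, i ≠ j → (p : ℝ) ^ (-(l : ℤ)) < ‖i - j‖)
    -- the polynomial `𝒫(X) = a₃X³ + … + a_{2D}X^{2D}`, nonnegative on ℝ
    (a : ℕ → ℝ) (D : ℕ) (hD : 2 ≤ D)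
    (hP : ∀ α : ℝ, 0 ≤ ∑ k ∈ Finset.Icc 3 (2 * D), a k * α ^ k)
    (α₄ : ℝ) (hα₄ : 0 < α₄)
    -- a Haar ("Lebesgue") measure on the coefficient space of `L_ℝ^l`
    (lebS : Measure (meanZero {x // x ∈ G})) [lebS.IsAddHaarMeasure]
    -- the Gaussian probability measure `P_l`, with density proportional to `e^{−E₀^{(l)}}`
    (Pl : Measure (meanZero {x // x ∈ G})) [IsProbabilityMeasure Pl]
    (hPl : ∀ A : Set (meanZero {x // x ∈ G}), MeasurableSet A →
      Pl A =
        (∫⁻ c in A,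
            ENNReal.ofReal (Real.exp (-(Efree p N μ w γ α₂ (phiC p N l G c)))) ∂lebS) /
        (∫⁻ c,
            ENNReal.ofReal (Real.exp (-(Efree p N μ w γ α₂ (phiC p N l G c)))) ∂lebS)) :
    -- the partition function `Z^{(l)}` lies in `(0, 1]`
    (0 < ∫ c, Real.exp (-(Eint p N μ a D α₄ (phiC p N l G c))) ∂Pl ∧
      (∫ c, Real.exp (-(Eint p N μ a D α₄ (phiC p N l G c))) ∂Pl) ≤ 1) ∧
    -- integrability of the correlation integrands
    (∀ (m : ℕ) (x : Fin m → (Fin N → ℚ_[p])),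
      Integrable
        (fun c : meanZero {x // x ∈ G} =>
          (∏ k, phiC p N l G c (x k)) *
            Real.exp (-(Eint p N μ a D α₄ (phiC p N l G c)))) Pl) ∧
    -- the discrete `m`-point correlation function vanishes off `(B_l^N)^m`
    (∀ (m : ℕ) (x : Fin m → (Fin N → ℚ_[p])), (∃ k, ¬‖x k‖ ≤ (p : ℝ) ^ (l : ℤ)) →
      (∫ c, (∏ k, phiC p N l G c (x k)) *
          Real.exp (-(Eint p N μ a D α₄ (phiC p N l G c))) ∂Pl) /
        (∫ c, Real.exp (-(Eint p N μ a D α₄ (phiC p N l G c))) ∂Pl) = 0) ∧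
    -- and it is constant on products of balls of radius `p^{-l}`
    (∀ (m : ℕ) (x y : Fin m → (Fin N → ℚ_[p])),
      (∀ k, ‖x k - y k‖ ≤ (p : ℝ) ^ (-(l : ℤ))) →
      (∫ c, (∏ k, phiC p N l G c (x k)) *
          Real.exp (-(Eint p N μ a D α₄ (phiC p N l G c))) ∂Pl) /
        (∫ c, Real.exp (-(Eint p N μ a D α₄ (phiC p N l G c))) ∂Pl) =
      (∫ c, (∏ k, phiC p N l G c (y k)) *
          Real.exp (-(Eint p N μ a D α₄ (phiC p N l G c))) ∂Pl) /
        (∫ c, Real.exp (-(Eint p N μ a D α₄ (phiC p N l G c))) ∂Pl)) := by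
  classical
  -- basic constants
  set r : ℝ := (p : ℝ) ^ (-(l : ℤ)) with hrdef
  have hp1 : (1:ℝ) ≤ (p:ℝ) := by exact_mod_cast (Fact.out : p.Prime).one_lt.le
  have hr : 0 < r := zpow_pos (by linarith) _
  have hrle : r ≤ (p:ℝ) ^ (l:ℤ) := zpow_le_zpow_right₀ hp1 (by omega)
  set v : ℝ := (μ (Metric.closedBall (0 : Fin N → ℚ_[p]) r)).toReal with hvdef
  have hvpos : 0 < v :=
    ENNReal.toReal_pos (Metric.measure_closedBall_pos μ 0 hr).ne'
      ((isCompact_closedBall _ _).measure_lt_top).ne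
  -- explicit formula for Eint
  have hgP0 : (fun t : ℝ => ∑ k ∈ Finset.Icc 3 (2*D), a k * t ^ k) 0 = 0 := by
    apply Finset.sum_eq_zero
    intro k hk
    rw [Finset.mem_Icc] at hk
    rw [zero_pow (by omega), mul_zero]
  have hEint : ∀ c : meanZero {x // x ∈ G}, Eint p N μ a D α₄ (phiC p N l G ↑c)
      = α₄ / 4 * (v * ∑ i : {x // x ∈ G},
          ∑ k ∈ Finset.Icc 3 (2*D), a k * ((c : {x // x ∈ G} → ℝ) i) ^ k) := by
    intro c
    rw [Eint]
    congr 1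
    exact integral_gcomp p N μ hGsep
      (fun t : ℝ => ∑ k ∈ Finset.Icc 3 (2*D), a k * t ^ k) hgP0 ↑c
  have hEintnn : ∀ c : meanZero {x // x ∈ G},
      0 ≤ Eint p N μ a D α₄ (phiC p N l G ↑c) := by
    intro c
    rw [Eint]
    exact mul_nonneg (by positivity) (integral_nonneg fun x => hP _)
  have hexp1 : ∀ c : meanZero {x // x ∈ G},
      Real.exp (-(Eint p N μ a D α₄ (phiC p N l G ↑c))) ≤ 1 := by
    intro c
    calc Real.exp (-(Eint p N μ a D α₄ (phiC p N l G ↑c))) ≤ Real.exp 0 :=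
          Real.exp_le_exp.2 (neg_nonpos.2 (hEintnn c))
      _ = 1 := Real.exp_zero
  -- lower bound for Efree
  set ε : ℝ := α₂ / 2 * v with hεdef
  have hε : 0 < ε := by positivity
  have hEfree : ∀ c : meanZero {x // x ∈ G},
      ε * (∑ i : {x // x ∈ G}, ((c : {x // x ∈ G} → ℝ) i) ^ 2)
      ≤ Efree p N μ w γ α₂ (phiC p N l G ↑c) := by
    intro c
    have hsq : ∫ x, (phiC p N l G (↑c) x) ^ 2 ∂μ
        = v * ∑ i : {x // x ∈ G}, ((c : {x // x ∈ G} → ℝ) i) ^ 2 :=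
      integral_gcomp p N μ hGsep (fun t : ℝ => t ^ 2) (by norm_num) ↑c
    rw [Efree, hsq]
    have hA : 0 ≤ ∫ x, ∫ y,
        (phiC p N l G (↑c) x - phiC p N l G (↑c) y) ^ 2 / w (x - y) ∂μ ∂μ :=
      integral_nonneg fun x => integral_nonneg fun y => div_nonneg (sq_nonneg _) (hw0 _)
    have h1 : 0 ≤ γ / 4 * ∫ x, ∫ y,
        (phiC p N l G (↑c) x - phiC p N l G (↑c) y) ^ 2 / w (x - y) ∂μ ∂μ :=
      mul_nonneg (by positivity) hA
    have h2 : ε * (∑ i : {x // x ∈ G}, ((c : {x // x ∈ G} → ℝ) i) ^ 2)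
        = α₂ / 2 * (v * ∑ i : {x // x ∈ G}, ((c : {x // x ∈ G} → ℝ) i) ^ 2) := by
      rw [hεdef]; ring
    linarith
  -- the density and normalization
  set ρ : meanZero {x // x ∈ G} → ENNReal :=
    fun c => ENNReal.ofReal (Real.exp (-(Efree p N μ w γ α₂ (phiC p N l G ↑c)))) with hρdef
  set Z₀ : ENNReal := ∫⁻ c, ρ c ∂lebS with hZ₀def
  have huniv : (∫⁻ c in Set.univ, ρ c ∂lebS) = Z₀ := by
    rw [Measure.restrict_univ, hZ₀def]
  have hPluniv : (1 : ENNReal) = Z₀ / Z₀ := by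
    rw [← (measure_univ : Pl Set.univ = 1), hPl Set.univ MeasurableSet.univ, huniv]
  have hZ₀0 : Z₀ ≠ 0 := by
    intro h
    rw [h] at hPluniv
    simp at hPluniv
  have hZ₀top : Z₀ ≠ ⊤ := by
    intro h
    rw [h] at hPluniv
    simp [ENNReal.div_eq_inv_mul, ENNReal.inv_top] at hPluniv
  -- comparison with a Gaussian density
  set bnd : meanZero {x // x ∈ G} → ENNReal :=
    fun c => ENNReal.ofReal (Real.exp
      (-(ε * ∑ i : {x // x ∈ G}, ((c : {x // x ∈ G} → ℝ) i) ^ 2))) with hbnddef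
  have hsumcont : Continuous (fun c : meanZero {x // x ∈ G} =>
      ∑ i : {x // x ∈ G}, ((c : {x // x ∈ G} → ℝ) i) ^ 2) := by
    apply continuous_finset_sum
    intro i _
    exact ((continuous_apply i).comp continuous_subtype_val).pow 2
  have hbnd_meas : Measurable bnd := by
    rw [hbnddef]
    exact (ENNReal.continuous_ofReal.comp
      (Real.continuous_exp.comp ((continuous_const.mul hsumcont).neg))).measurable
  have hρ_le : ∀ c, ρ c ≤ bnd c := by
    intro c
    rw [hρdef, hbnddef]
    exact ENNReal.ofReal_le_ofReal (Real.exp_le_exp.2 (neg_le_neg (hEfree c)))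
  have hPl_le : Pl ≤ Z₀⁻¹ • lebS.withDensity bnd := by
    rw [Measure.le_iff]
    intro A hA
    rw [hPl A hA, Measure.smul_apply, withDensity_apply _ hA, smul_eq_mul,
      ENNReal.div_eq_inv_mul]
    exact mul_le_mul_right (lintegral_mono fun c => hρ_le c) _
  -- pointwise bound on phiC
  set K : ℝ := (Fintype.card {x // x ∈ G} : ℝ) with hKdef
  have hK0 : 0 ≤ K := by positivity
  have hballInd_le : ∀ (i z : Fin N → ℚ_[p]), |ballInd p N l i z| ≤ 1 := by
    intro i z
    by_cases h : ‖z - i‖ ≤ r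
    · rw [ballInd_of_mem p N h]; norm_num
    · rw [ballInd_of_not_mem p N h]; norm_num
  have hphi_bd : ∀ (c : meanZero {x // x ∈ G}) (z : Fin N → ℚ_[p]),
      |phiC p N l G (↑c) z| ≤
        K * Real.sqrt (∑ i : {x // x ∈ G}, ((c : {x // x ∈ G} → ℝ) i) ^ 2) := by
    intro c z
    rw [phiC]
    calc |∑ i : {x // x ∈ G}, (c : {x // x ∈ G} → ℝ) i * ballInd p N l (↑i) z|
        ≤ ∑ i : {x // x ∈ G}, |(c : {x // x ∈ G} → ℝ) i * ballInd p N l (↑i) z| :=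
          Finset.abs_sum_le_sum_abs _ _
      _ ≤ ∑ i : {x // x ∈ G},
            Real.sqrt (∑ j : {x // x ∈ G}, ((c : {x // x ∈ G} → ℝ) j) ^ 2) := by
          apply Finset.sum_le_sum
          intro i _
          rw [abs_mul]
          calc |(c : {x // x ∈ G} → ℝ) i| * |ballInd p N l (↑i) z|
              ≤ |(c : {x // x ∈ G} → ℝ) i| * 1 :=
                mul_le_mul_of_nonneg_left (hballInd_le _ _) (abs_nonneg _)
            _ = |(c : {x // x ∈ G} → ℝ) i| := mul_one _
            _ = Real.sqrt (((c : {x // x ∈ G} → ℝ) i) ^ 2) := (Real.sqrt_sq_eq_abs _).symm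
            _ ≤ Real.sqrt (∑ j : {x // x ∈ G}, ((c : {x // x ∈ G} → ℝ) j) ^ 2) :=
              Real.sqrt_le_sqrt (Finset.single_le_sum
                (f := fun j => ((c : {x // x ∈ G} → ℝ) j) ^ 2)
                (fun j _ => sq_nonneg _) (Finset.mem_univ i))
      _ = K * Real.sqrt (∑ j : {x // x ∈ G}, ((c : {x // x ∈ G} → ℝ) j) ^ 2) := by
          rw [Finset.sum_const, Finset.card_univ, nsmul_eq_mul, hKdef]
  -- KEY integrability
  have key : ∀ (m : ℕ) (x : Fin m → (Fin N → ℚ_[p])),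
      Integrable (fun c : meanZero {x // x ∈ G} =>
        (∏ k, phiC p N l G (↑c) (x k)) *
          Real.exp (-(Eint p N μ a D α₄ (phiC p N l G ↑c)))) Pl := by
    intro m x
    set F : meanZero {x // x ∈ G} → ℝ := fun c =>
      (∏ k, phiC p N l G (↑c) (x k)) *
        Real.exp (-(Eint p N μ a D α₄ (phiC p N l G ↑c))) with hFdef
    -- measurability
    have hFmeas : Measurable F := by
      have hcont : Continuous (fun d : {x // x ∈ G} → ℝ =>
          (∏ k, phiC p N l G d (x k)) * Real.exp (-(α₄ / 4 * (v * ∑ i : {x // x ∈ G},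
            ∑ k ∈ Finset.Icc 3 (2*D), a k * (d i) ^ k)))) := by
        apply Continuous.mul
        · apply continuous_finset_prod
          intro k _
          unfold phiC
          apply continuous_finset_sum
          intro i _
          exact (continuous_apply i).mul continuous_const
        · apply Real.continuous_exp.comp
          apply Continuous.neg
          apply continuous_const.mul
          apply continuous_const.mul
          apply continuous_finset_sum
          intro i _
          apply continuous_finset_sum
          intro k _
          exact continuous_const.mul ((continuous_apply i).pow k)
      have hFeq : F = (fun d : {x // x ∈ G} → ℝ =>
          (∏ k, phiC p N l G d (x k)) * Real.exp (-(α₄ / 4 * (v * ∑ i : {x // x ∈ G},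
            ∑ k ∈ Finset.Icc 3 (2*D), a k * (d i) ^ k)))) ∘
          (fun c : meanZero {x // x ∈ G} => (c : {x // x ∈ G} → ℝ)) := by
        funext c
        simp only [Function.comp_apply, hFdef]
        rw [hEint c]
      rw [hFeq]
      exact hcont.measurable.comp measurable_subtype_coe
    -- pointwise bound
    have hFbd : ∀ c : meanZero {x // x ∈ G}, |F c| ≤
        K ^ m * (1 + ∑ i : {x // x ∈ G}, ((c : {x // x ∈ G} → ℝ) i) ^ 2) ^ m := by
      intro c
      set t : ℝ := ∑ i : {x // x ∈ G}, ((c : {x // x ∈ G} → ℝ) i) ^ 2 with htdef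
      have ht0 : 0 ≤ t := Finset.sum_nonneg fun i _ => sq_nonneg _
      have hsqrt : Real.sqrt t ≤ 1 + t := by
        nlinarith [Real.sq_sqrt ht0, Real.sqrt_nonneg t]
      rw [hFdef, abs_mul]
      calc |∏ k, phiC p N l G (↑c) (x k)| *
            |Real.exp (-(Eint p N μ a D α₄ (phiC p N l G ↑c)))|
          ≤ |∏ k, phiC p N l G (↑c) (x k)| * 1 := by
            apply mul_le_mul_of_nonneg_left _ (abs_nonneg _)
            rw [abs_of_pos (Real.exp_pos _)]
            exact hexp1 c
        _ = |∏ k, phiC p N l G (↑c) (x k)| := mul_one _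
        _ ≤ ∏ k, |phiC p N l G (↑c) (x k)| := (Finset.abs_prod _ _).le
        _ ≤ ∏ _k : Fin m, K * Real.sqrt t := by
            apply Finset.prod_le_prod (fun k _ => abs_nonneg _)
            intro k _
            exact hphi_bd c (x k)
        _ = (K * Real.sqrt t) ^ m := by
            rw [Finset.prod_const, Finset.card_univ, Fintype.card_fin]
        _ = K ^ m * Real.sqrt t ^ m := mul_pow _ _ _
        _ ≤ K ^ m * (1 + t) ^ m := by
            apply mul_le_mul_of_nonneg_left _ (pow_nonneg hK0 m)
            exact pow_le_pow_left₀ (Real.sqrt_nonneg t) hsqrt m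
    -- absorb the polynomial into the Gaussian
    obtain ⟨Cm, hCm, hpe⟩ := poly_exp m hε
    have hH : Integrable (fun c : meanZero {x // x ∈ G} =>
        (K ^ m * Cm) * Real.exp (-(ε / 2 * ∑ i : {x // x ∈ G},
          ((c : {x // x ∈ G} → ℝ) i) ^ 2))) lebS :=
      (gauss_int (meanZero {x // x ∈ G}) lebS (half_pos hε)).const_mul _
    -- finite integral
    have hfin : HasFiniteIntegral F Pl := by
      rw [hasFiniteIntegral_def]
      calc ∫⁻ c, ‖F c‖₊ ∂Pl
          ≤ ∫⁻ c, ‖F c‖₊ ∂(Z₀⁻¹ • lebS.withDensity bnd) := lintegral_mono' hPl_le le_rfl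
        _ = Z₀⁻¹ * ∫⁻ c, ‖F c‖₊ ∂(lebS.withDensity bnd) := lintegral_smul_measure _ _
        _ = Z₀⁻¹ * ∫⁻ c, (bnd * fun c => (‖F c‖₊ : ENNReal)) c ∂lebS := by
            simp only [← enorm_eq_nnnorm]
            rw [lintegral_withDensity_eq_lintegral_mul _ hbnd_meas hFmeas.enorm]
        _ ≤ Z₀⁻¹ * ∫⁻ c, ENNReal.ofReal ((K ^ m * Cm) * Real.exp
              (-(ε / 2 * ∑ i : {x // x ∈ G}, ((c : {x // x ∈ G} → ℝ) i) ^ 2))) ∂lebS := by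
            apply mul_le_mul_right
            apply lintegral_mono
            intro c
            set t : ℝ := ∑ i : {x // x ∈ G}, ((c : {x // x ∈ G} → ℝ) i) ^ 2 with htdef
            have ht0 : 0 ≤ t := Finset.sum_nonneg fun i _ => sq_nonneg _
            simp only [Pi.mul_apply]
            rw [hbnddef, ← enorm_eq_nnnorm, Real.enorm_eq_ofReal_abs,
              ← ENNReal.ofReal_mul (Real.exp_pos _).le]
            apply ENNReal.ofReal_le_ofReal
            calc Real.exp (-(ε * t)) * |F c|
                ≤ Real.exp (-(ε * t)) * (K ^ m * (1 + t) ^ m) :=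
                  mul_le_mul_of_nonneg_left (hFbd c) (Real.exp_pos _).le
              _ = K ^ m * ((1 + t) ^ m * Real.exp (-(ε * t))) := by ring
              _ ≤ K ^ m * (Cm * Real.exp (-(ε / 2 * t))) :=
                  mul_le_mul_of_nonneg_left (hpe t ht0) (pow_nonneg hK0 m)
              _ = (K ^ m * Cm) * Real.exp (-(ε / 2 * t)) := by ring
        _ < ⊤ := by
            apply ENNReal.mul_lt_top (ENNReal.inv_lt_top.2 (pos_iff_ne_zero.2 hZ₀0))
            have h2 := hH.2
            rw [hasFiniteIntegral_def] at h2
            refine lt_of_le_of_lt (le_of_eq ?_) h2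
            apply lintegral_congr
            intro c
            rw [Real.enorm_eq_ofReal]
            positivity
    exact ⟨hFmeas.aestronglyMeasurable, hfin⟩
  -- the m = 0 case : integrability of exp(-Eint)
  have key0 : Integrable (fun c : meanZero {x // x ∈ G} =>
      Real.exp (-(Eint p N μ a D α₄ (phiC p N l G ↑c)))) Pl := by
    have := key 0 (fun _ => 0)
    simpa using this
  refine ⟨⟨?_, ?_⟩, key, ?_, ?_⟩
  · -- Z > 0
    rw [integral_pos_iff_support_of_nonneg (fun c => (Real.exp_pos _).le) key0]
    have : Function.support (fun c : meanZero {x // x ∈ G} =>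
        Real.exp (-(Eint p N μ a D α₄ (phiC p N l G ↑c)))) = Set.univ := by
      ext c
      simp [Function.mem_support, (Real.exp_pos _).ne']
    rw [this, measure_univ]
    norm_num
  · -- Z ≤ 1
    calc ∫ c, Real.exp (-(Eint p N μ a D α₄ (phiC p N l G ↑c))) ∂Pl
        ≤ ∫ _c, (1:ℝ) ∂Pl := integral_mono key0 (integrable_const 1) fun c => hexp1 c
      _ = 1 := by simp
  · -- vanishing off the big ball
    intro m x ⟨k0, hk0⟩
    have hzero : ∀ c : meanZero {x // x ∈ G}, (∏ k, phiC p N l G (↑c) (x k)) = 0 := by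
      intro c
      apply Finset.prod_eq_zero (Finset.mem_univ k0)
      apply phiC_of_not_mem
      intro i hi hle
      apply hk0
      have h1 : ‖x k0‖ ≤ max ‖x k0 - i‖ ‖i‖ := by
        calc ‖x k0‖ = ‖(x k0 - i) + i‖ := by rw [sub_add_cancel]
          _ ≤ max ‖x k0 - i‖ ‖i‖ := ultra_add p N _ _
      exact h1.trans (max_le (hle.trans hrle) (hGmem i hi))
    simp only [hzero, zero_mul, integral_zero, zero_div]
  · -- local constancy
    intro m x y hxy
    have hphieq : ∀ (c : meanZero {x // x ∈ G}) (k : Fin m),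
        phiC p N l G (↑c) (x k) = phiC p N l G (↑c) (y k) := by
      intro c k
      rw [phiC, phiC]
      apply Finset.sum_congr rfl
      intro i _
      congr 1
      -- ballInd equal
      by_cases hyi : ‖y k - (i : Fin N → ℚ_[p])‖ ≤ r
      · rw [ballInd_of_mem p N hyi, ballInd_of_mem p N ?_]
        calc ‖x k - (i : Fin N → ℚ_[p])‖ ≤ max ‖x k - y k‖ ‖y k - (i : Fin N → ℚ_[p])‖ :=
              ultra_sub p N _ _ _
          _ ≤ r := max_le (hxy k) hyi
      · rw [ballInd_of_not_mem p N hyi, ballInd_of_not_mem p N ?_]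
        intro hxi
        apply hyi
        calc ‖y k - (i : Fin N → ℚ_[p])‖ ≤ max ‖y k - x k‖ ‖x k - (i : Fin N → ℚ_[p])‖ :=
              ultra_sub p N _ _ _
          _ ≤ r := by
              rw [norm_sub_rev]
              exact max_le (hxy k) hxi
    have : ∀ c : meanZero {x // x ∈ G},
        (∏ k, phiC p N l G (↑c) (x k)) = ∏ k, phiC p N l G (↑c) (y k) := by
      intro c
      exact Finset.prod_congr rfl fun k _ => hphieq c k
    simp only [this]
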